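/- Let 0 ≤ k ≤ n be integers and R a commutative ring. The cohomology of the Schubert cochain complex over R is isomorphic, as a graded R-module, to ⊕_{S ∈ {n;k}} V_S, where V_S is placed in degree d(S) and V_S := R if In(S) = ∅ = Out(S); V_S := ker(R →2→ R) if In(S) ∪ Out(S) ≠ ∅ and min(In(S) ∪ Out(S)) ∈ Out(S); and V_S := coker(R →2→ R) if In(S) ∪ Out(S) ≠ ∅ and min(In(S) ∪ Out(S)) ∈ In(S). -/

import Mathlib

open scoped BigOperators Classical

/-- `{n;k}`: the set of subsets of `{1,…,n}` of cardinality `k`. -/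
def Sset (n k : ℕ) : Finset (Finset ℕ) := (Finset.Icc 1 n).powersetCard k

/-- `elt S r` is `s_r`, the `r`-th smallest element of `S` (1-indexed); junk value `0` out of range. -/
def elt (S : Finset ℕ) (r : ℕ) : ℕ := (S.sort (· ≤ ·)).getD (r - 1) 0

/-- `s_{r+1}`, with the convention `s_{k+1} = n+1`. -/
def nxt (n : ℕ) (S : Finset ℕ) (r : ℕ) : ℕ := if r = S.card then n + 1 else elt S (r + 1)

/-- `s_{r-1}`, with the convention `s_0 = 0`. -/
def prv (S : Finset ℕ) (r : ℕ) : ℕ := if r = 1 then 0 else elt S (r - 1)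

/-- `d_r(S) = Σ_{r ≤ i ≤ k} (s_i − i)`. -/
def dr (S : Finset ℕ) (r : ℕ) : ℕ := ∑ i ∈ Finset.Icc r S.card, (elt S i - i)

/-- `d(S) = d_1(S)`. -/
def dS (S : Finset ℕ) : ℕ := dr S 1

/-- `S_r`: the set obtained from `S` by replacing `s_r` with `s_r + 1`. -/
def Sr (S : Finset ℕ) (r : ℕ) : Finset ℕ := insert (elt S r + 1) (S.erase (elt S r))

/-- `In(S) = {i ∈ {1,…,k} : s_i ≡ k (mod 2) and s_{i−1} < s_i − 1}` (convention `s_0 = 0`). -/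
def InS (k : ℕ) (S : Finset ℕ) : Finset ℕ :=
  (Finset.Icc 1 k).filter fun i => elt S i % 2 = k % 2 ∧ prv S i + 1 < elt S i

/-- `Out(S) = {i ∈ {1,…,k} : s_i ≢ k (mod 2) and s_i + 1 < s_{i+1}}` (convention `s_{k+1} = n+1`). -/
def OutS (n k : ℕ) (S : Finset ℕ) : Finset ℕ :=
  (Finset.Icc 1 k).filter fun i => ¬ (elt S i % 2 = k % 2) ∧ elt S i + 1 < nxt n S i

/-- The coefficient of `T` in the Schubert differential `δ(S)`. -/
noncomputable def schubCoeff (n k : ℕ) (R : Type*) [CommRing R] (T S : Finset ℕ) : R :=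
  ∑ r ∈ Finset.Icc 1 k,
    if 1 < nxt n S r - elt S r ∧ Odd ((k : ℤ) - elt S r) ∧ T = Sr S r
    then (-1 : R) ^ dr S r * 2 else 0

/-- The degree-`m` graded piece of `{n;k}`. -/
def Dfin (n k m : ℕ) : Finset (Finset ℕ) := (Sset n k).filter fun S => dS S = m

/-- The degree-`m` term of the Schubert cochain complex over `R`:
the free `R`-module on `{S ∈ {n;k} : d(S) = m}`. -/
abbrev Cgr (n k : ℕ) (R : Type*) [CommRing R] (m : ℕ) := ↥(Dfin n k m) → R

/-- The Schubert differential in degree `m`. -/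
noncomputable def schubDeltaGr (n k : ℕ) (R : Type*) [CommRing R] (m : ℕ) :
    Cgr n k R m →ₗ[R] Cgr n k R (m + 1) :=
  Matrix.mulVecLin fun T S => schubCoeff n k R T.1 S.1

/-- The submodule of coboundaries in degree `m`. -/
noncomputable def Bsub (n k : ℕ) (R : Type*) [CommRing R] :
    (m : ℕ) → Submodule R (Cgr n k R m)
  | 0 => ⊥
  | (m + 1) => LinearMap.range (schubDeltaGr n k R m)

/-- The degree-`m` cohomology of the Schubert cochain complex over `R`. -/
noncomputable abbrev Hgr (n k : ℕ) (R : Type*) [CommRing R] (m : ℕ) :=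
  ↥(LinearMap.ker (schubDeltaGr n k R m)) ⧸
    Submodule.comap (LinearMap.ker (schubDeltaGr n k R m)).subtype (Bsub n k R m)

/-- Multiplication by `2` as an `R`-linear endomorphism of `R`. -/
noncomputable def two (R : Type*) [CommRing R] : R →ₗ[R] R := LinearMap.lsmul R R 2

/-- The degree-`m` sets with `In(S) = ∅ = Out(S)`. -/
noncomputable def freeIdxGr (n k m : ℕ) : Finset (Finset ℕ) :=
  (Dfin n k m).filter fun S => InS k S = ∅ ∧ OutS n k S = ∅

/-- The degree-`m` sets with `In(S) ∪ Out(S) ≠ ∅` and `min (In(S) ∪ Out(S)) ∈ Out(S)`. -/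
noncomputable def minOutIdxGr (n k m : ℕ) : Finset (Finset ℕ) :=
  (Dfin n k m).filter fun S => ∃ i ∈ OutS n k S, ∀ j ∈ InS k S ∪ OutS n k S, i ≤ j

/-- The degree-`m` sets with `In(S) ∪ Out(S) ≠ ∅` and `min (In(S) ∪ Out(S)) ∈ In(S)`. -/
noncomputable def minInIdxGr (n k m : ℕ) : Finset (Finset ℕ) :=
  (Dfin n k m).filter fun S => ∃ i ∈ InS k S, ∀ j ∈ InS k S ∪ OutS n k S, i ≤ j

/-!
The differential is `δ = 2q` with `q(S) = Σ_{r ∈ Out(S)} (-1)^{d_r(S)} S_r`, and `q² = 0`.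
If `p = min (In(S) ∪ Out(S))` lies in `Out(S)`, then `S_p` has the same `In ∪ Out` and the same
minimum `p`, now in `In(S_p)`; this pairs the sets of the second kind bijectively with those of
the third kind, one degree up. Replacing each basis vector `S_p` by `±q(S)` is a unitriangular
change of basis after which `δ` sends `S` to `±2 S_p` and kills every other basis vector. The
cohomology of this split complex is `R` at unpaired sets, `ker 2` at the lower and `coker 2` at the
upper member of each pair.
-/

section Transport

variable {R M M' N N' : Type*} [Ring R] [AddCommGroup M] [Module R M] [AddCommGroup M']
  [Module R M'] [AddCommGroup N] [Module R N] [AddCommGroup N'] [Module R N']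

noncomputable def subquotientEquivOfMapEq (e : M ≃ₗ[R] M') {K B : Submodule R M}
    {K' B' : Submodule R M'} (hK : K.map (e : M →ₗ[R] M') = K')
    (hB : B.map (e : M →ₗ[R] M') = B') :
    (K ⧸ B.comap K.subtype) ≃ₗ[R] (K' ⧸ B'.comap K'.subtype) := by
  subst hK hB
  refine Submodule.Quotient.equiv _ _ (e.submoduleMap K) ?_
  ext ⟨y, hy⟩
  simp [Submodule.mem_map_equiv]

lemma ker_eq_map_of_comp_eq {e : M ≃ₗ[R] M'} {e' : N ≃ₗ[R] N'} {f : M →ₗ[R] N}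
    {g : M' →ₗ[R] N'} (h : g ∘ₗ (e : M →ₗ[R] M') = (e' : N →ₗ[R] N') ∘ₗ f) :
    LinearMap.ker g = (LinearMap.ker f).map (e : M →ₗ[R] M') := by
  ext x
  have hx := LinearMap.congr_fun h (e.symm x)
  simp only [LinearMap.comp_apply, LinearEquiv.coe_coe, LinearEquiv.apply_symm_apply] at hx
  rw [Submodule.mem_map_equiv, LinearMap.mem_ker, LinearMap.mem_ker, hx,
    LinearEquiv.map_eq_zero_iff]

lemma range_eq_map_of_comp_eq {e : M ≃ₗ[R] M'} {e' : N ≃ₗ[R] N'} {f : M →ₗ[R] N}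
    {g : M' →ₗ[R] N'} (h : g ∘ₗ (e : M →ₗ[R] M') = (e' : N →ₗ[R] N') ∘ₗ f) :
    LinearMap.range g = (LinearMap.range f).map (e' : N →ₗ[R] N') := by
  rw [← LinearEquiv.range_comp e g, h, LinearMap.range_comp]

end Transport

lemma Matrix.mul_self_eq_zero_of_apply_eq_zero {ι R : Type*} [Fintype ι]
    [NonUnitalNonAssocSemiring R]
    (N : Matrix ι ι R) (p : ι → Prop) (h : ∀ i j, p i ∨ ¬ p j → N i j = 0) :
    N * N = 0 := by
  ext i j
  rw [Matrix.mul_apply, Matrix.zero_apply]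
  refine Finset.sum_eq_zero fun l _ => ?_
  by_cases hl : p l
  · rw [h l j (Or.inl hl), mul_zero]
  · rw [h i l (Or.inr hl), zero_mul]

section Enumeration

variable {S : Finset ℕ} {k : ℕ}

lemma elt_eq_orderEmbOfFin (hS : S.card = k) {i : ℕ} (h1 : 1 ≤ i) (h2 : i ≤ k) :
    elt S i = S.orderEmbOfFin hS ⟨i - 1, by omega⟩ := by
  subst hS
  simp [elt, Finset.orderEmbOfFin_apply, List.getD_eq_getElem?_getD,
    List.getElem?_eq_getElem (show i - 1 < (S.sort (· ≤ ·)).length by simp; omega)]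

lemma elt_mem (hS : S.card = k) {i : ℕ} (h1 : 1 ≤ i) (h2 : i ≤ k) : elt S i ∈ S := by
  rw [elt_eq_orderEmbOfFin hS h1 h2]
  exact S.orderEmbOfFin_mem hS _

lemma elt_lt_elt (hS : S.card = k) {i j : ℕ} (h1 : 1 ≤ i) (hij : i < j) (h2 : j ≤ k) :
    elt S i < elt S j := by
  rw [elt_eq_orderEmbOfFin hS h1 (by omega), elt_eq_orderEmbOfFin hS (by omega) h2]
  exact (S.orderEmbOfFin hS).strictMono (Fin.mk_lt_mk.mpr (by omega))

lemma elt_le_elt (hS : S.card = k) {i j : ℕ} (h1 : 1 ≤ i) (hij : i ≤ j) (h2 : j ≤ k) :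
    elt S i ≤ elt S j := by
  rcases hij.eq_or_lt with rfl | hij
  · rfl
  · exact (elt_lt_elt hS h1 hij h2).le

lemma exists_elt_eq_of_mem (hS : S.card = k) {x : ℕ} (hx : x ∈ S) :
    ∃ i, 1 ≤ i ∧ i ≤ k ∧ elt S i = x := by
  rw [← Finset.mem_coe, ← S.range_orderEmbOfFin hS] at hx
  obtain ⟨⟨i, hi⟩, rfl⟩ := hx
  exact ⟨i + 1, by omega, hi, by rw [elt_eq_orderEmbOfFin hS (by omega) hi]; rfl⟩

lemma elt_eq_of_strictMono (hS : S.card = k) {t : ℕ → ℕ}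
    (hmono : ∀ i j, 1 ≤ i → i < j → j ≤ k → t i < t j)
    (hmem : ∀ i, 1 ≤ i → i ≤ k → t i ∈ S)
    {i : ℕ} (h1 : 1 ≤ i) (h2 : i ≤ k) : elt S i = t i := by
  have key := Finset.orderEmbOfFin_unique hS (f := fun j : Fin k => t (j + 1))
    (fun j => hmem _ (by omega) j.2) (fun a b hab => hmono _ _ (by omega) (by simpa) b.2)
  rw [elt_eq_orderEmbOfFin hS h1 h2, ← key]
  simp only
  congr 1
  omega

end Enumeration

section Sset

variable {n k : ℕ} {S : Finset ℕ}

lemma card_of_mem_Sset (hS : S ∈ Sset n k) : S.card = k := (Finset.mem_powersetCard.mp hS).2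

lemma elt_mem_Icc (hS : S ∈ Sset n k) {i : ℕ} (h1 : 1 ≤ i) (h2 : i ≤ k) :
    1 ≤ elt S i ∧ elt S i ≤ n :=
  Finset.mem_Icc.mp ((Finset.mem_powersetCard.mp hS).1 (elt_mem (card_of_mem_Sset hS) h1 h2))

lemma le_elt (hS : S ∈ Sset n k) {i : ℕ} (h1 : 1 ≤ i) (h2 : i ≤ k) : i ≤ elt S i := by
  induction i, h1 using Nat.le_induction with
  | base => exact (elt_mem_Icc hS le_rfl h2).1
  | succ i hi ih =>
    have := elt_lt_elt (card_of_mem_Sset hS) hi (Nat.lt_add_one i) h2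
    have := ih (by omega)
    omega

lemma nxt_of_lt (hS : S ∈ Sset n k) {r : ℕ} (h : r < k) : nxt n S r = elt S (r + 1) := by
  rw [nxt, card_of_mem_Sset hS, if_neg h.ne]

lemma nxt_last (hS : S ∈ Sset n k) : nxt n S k = n + 1 := by
  rw [nxt, card_of_mem_Sset hS, if_pos rfl]

lemma prv_of_one_lt {r : ℕ} (h : 1 < r) : prv S r = elt S (r - 1) := by
  rw [prv, if_neg h.ne']

lemma elt_lt_nxt (hS : S ∈ Sset n k) {r : ℕ} (h1 : 1 ≤ r) (h2 : r ≤ k) :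
    elt S r < nxt n S r := by
  rcases h2.lt_or_eq with h | rfl
  · rw [nxt_of_lt hS h]
    exact elt_lt_elt (card_of_mem_Sset hS) h1 (by omega) h
  · rw [nxt_last hS]
    linarith [elt_mem_Icc hS h1 le_rfl]

lemma nxt_le (hS : S ∈ Sset n k) {r : ℕ} (h1 : 1 ≤ r) (h2 : r ≤ k) :
    nxt n S r ≤ n + 1 := by
  rcases h2.lt_or_eq with h | rfl
  · rw [nxt_of_lt hS h]
    linarith [elt_mem_Icc hS (i := r + 1) (by omega) h]
  · rw [nxt_last hS]

lemma prv_lt_elt (hS : S ∈ Sset n k) {r : ℕ} (h1 : 1 ≤ r) (h2 : r ≤ k) :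
    prv S r < elt S r := by
  rcases h1.eq_or_lt with rfl | h
  · rw [prv, if_pos rfl]
    exact (elt_mem_Icc hS le_rfl h2).1
  · rw [prv_of_one_lt h]
    exact elt_lt_elt (card_of_mem_Sset hS) (by omega) (by omega) h2

lemma nxt_le_elt (hS : S ∈ Sset n k) {r j : ℕ} (hrj : r < j) (hj : j ≤ k) :
    nxt n S r ≤ elt S j := by
  rw [nxt_of_lt hS (by omega)]
  exact elt_le_elt (card_of_mem_Sset hS) (by omega) hrj hj

lemma elt_le_prv (hS : S ∈ Sset n k) {i r : ℕ} (h1 : 1 ≤ i) (hir : i < r) (hr : r ≤ k) :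
    elt S i ≤ prv S r := by
  rw [prv_of_one_lt (by omega)]
  exact elt_le_elt (card_of_mem_Sset hS) h1 (by omega) (by omega)

lemma insert_erase_elt_spec (hS : S ∈ Sset n k) {r v : ℕ} (h1 : 1 ≤ r) (h2 : r ≤ k)
    (hlo : prv S r < v) (hhi : v < nxt n S r) :
    insert v (S.erase (elt S r)) ∈ Sset n k ∧ ∀ i, 1 ≤ i → i ≤ k →
      elt (insert v (S.erase (elt S r))) i = if i = r then v else elt S i := by
  have hcard := card_of_mem_Sset hS
  have hv : v ∉ S.erase (elt S r) := by
    intro hv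
    obtain ⟨hne, hvS⟩ := Finset.mem_erase.mp hv
    obtain ⟨i, hi1, hik, rfl⟩ := exists_elt_eq_of_mem hcard hvS
    rcases lt_trichotomy i r with h | rfl | h
    · linarith [elt_le_prv hS hi1 h h2]
    · exact hne rfl
    · linarith [nxt_le_elt hS h hik]
  have hcard' : (insert v (S.erase (elt S r))).card = k := by
    rw [Finset.card_insert_of_notMem hv, Finset.card_erase_of_mem (elt_mem hcard h1 h2), hcard]
    omega
  refine ⟨Finset.mem_powersetCard.mpr ⟨?_, hcard'⟩, fun i => elt_eq_of_strictMono hcard'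
    (t := fun i => if i = r then v else elt S i) ?_ ?_⟩
  · intro x hx
    rcases Finset.mem_insert.mp hx with rfl | hx
    · have := nxt_le hS h1 h2
      exact Finset.mem_Icc.mpr ⟨by omega, by omega⟩
    · exact (Finset.mem_powersetCard.mp hS).1 (Finset.mem_of_mem_erase hx)
  · intro i j hi hij hj
    have := elt_lt_elt hcard hi hij hj
    split_ifs with hir hjr hjr
    · omega
    · linarith [nxt_le_elt hS (hir ▸ hij) hj]
    · linarith [elt_le_prv hS hi (hjr ▸ hij) h2]
    · exact this
  · intro i hi1 hik
    split_ifs with hir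
    · exact Finset.mem_insert_self _ _
    · refine Finset.mem_insert_of_mem (Finset.mem_erase.mpr ⟨?_, elt_mem hcard hi1 hik⟩)
      rcases Nat.lt_or_gt_of_ne hir with h | h
      · exact (elt_lt_elt hcard hi1 h h2).ne
      · exact (elt_lt_elt hcard h1 h hik).ne'

lemma dr_eq_sum (hS : S ∈ Sset n k) (r : ℕ) :
    dr S r = ∑ i ∈ Finset.Icc r k, (elt S i - i) := by
  rw [dr, card_of_mem_Sset hS]

end Sset

lemma mem_OutS_iff {n k r : ℕ} {S : Finset ℕ} : r ∈ OutS n k S ↔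
    (1 ≤ r ∧ r ≤ k) ∧ elt S r % 2 ≠ k % 2 ∧ elt S r + 1 < nxt n S r := by
  simp [OutS, and_assoc]

lemma mem_InS_iff {k r : ℕ} {S : Finset ℕ} : r ∈ InS k S ↔
    (1 ≤ r ∧ r ≤ k) ∧ elt S r % 2 = k % 2 ∧ prv S r + 1 < elt S r := by
  simp [InS, and_assoc]

lemma notMem_InS_of_mem_OutS {n k r : ℕ} {S : Finset ℕ} (h : r ∈ OutS n k S) :
    r ∉ InS k S :=
  fun h' => (mem_OutS_iff.mp h).2.1 (mem_InS_iff.mp h').2.1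

section Raise

variable {n k r : ℕ} {S : Finset ℕ}

lemma Sr_spec (hS : S ∈ Sset n k) (hr : r ∈ OutS n k S) :
    Sr S r ∈ Sset n k ∧
      ∀ i, 1 ≤ i → i ≤ k → elt (Sr S r) i = if i = r then elt S r + 1 else elt S i := by
  obtain ⟨⟨h1, h2⟩, -, hgap⟩ := mem_OutS_iff.mp hr
  exact insert_erase_elt_spec hS h1 h2 (by linarith [prv_lt_elt hS h1 h2]) hgap

lemma Sr_mem_Sset (hS : S ∈ Sset n k) (hr : r ∈ OutS n k S) : Sr S r ∈ Sset n k :=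
  (Sr_spec hS hr).1

lemma elt_Sr (hS : S ∈ Sset n k) (hr : r ∈ OutS n k S) {i : ℕ} (h1 : 1 ≤ i) (h2 : i ≤ k) :
    elt (Sr S r) i = if i = r then elt S r + 1 else elt S i :=
  (Sr_spec hS hr).2 i h1 h2

lemma nxt_Sr (hS : S ∈ Sset n k) (hr : r ∈ OutS n k S) {j : ℕ} (h1 : 1 ≤ j) (h2 : j ≤ k) :
    nxt n (Sr S r) j = if j + 1 = r then elt S r + 1 else nxt n S j := by
  rcases h2.lt_or_eq with h | rfl
  · rw [nxt_of_lt (Sr_mem_Sset hS hr) h, nxt_of_lt hS h, elt_Sr hS hr (by omega) h]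
  · rw [nxt_last (Sr_mem_Sset hS hr), nxt_last hS, if_neg (by linarith [(mem_OutS_iff.mp hr).1])]

lemma prv_Sr (hS : S ∈ Sset n k) (hr : r ∈ OutS n k S) {j : ℕ} (h1 : 1 ≤ j) (h2 : j ≤ k) :
    prv (Sr S r) j = if j = r + 1 then elt S r + 1 else prv S j := by
  rcases h1.eq_or_lt with rfl | h
  · simp [prv, Nat.one_le_iff_ne_zero.mp (mem_OutS_iff.mp hr).1.1]
  · rw [prv_of_one_lt h, prv_of_one_lt h, elt_Sr hS hr (by omega) (by omega)]
    simp only [show j - 1 = r ↔ j = r + 1 by omega]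

lemma dr_Sr (hS : S ∈ Sset n k) (hr : r ∈ OutS n k S) {i : ℕ} (hi : 1 ≤ i) :
    dr (Sr S r) i = dr S i + if i ≤ r then 1 else 0 := by
  have hrk := (mem_OutS_iff.mp hr).1.2
  have hterm : ∀ j ∈ Finset.Icc i k,
      elt (Sr S r) j - j = (elt S j - j) + if j = r then 1 else 0 := by
    intro j hj
    obtain ⟨hij, hjk⟩ := Finset.mem_Icc.mp hj
    have := le_elt hS (by omega) hjk
    rw [elt_Sr hS hr (by omega) hjk]
    rcases eq_or_ne j r with rfl | h
    · rw [if_pos rfl, if_pos rfl]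
      omega
    · rw [if_neg h, if_neg h, add_zero]
  rw [dr_eq_sum (Sr_mem_Sset hS hr), dr_eq_sum hS, Finset.sum_congr rfl hterm,
    Finset.sum_add_distrib, Finset.sum_ite_eq']
  simp [hrk]

lemma dS_Sr (hS : S ∈ Sset n k) (hr : r ∈ OutS n k S) : dS (Sr S r) = dS S + 1 := by
  rw [dS, dS, dr_Sr hS hr le_rfl, if_pos (mem_OutS_iff.mp hr).1.1]

lemma mem_OutS_Sr (hS : S ∈ Sset n k) (hr : r ∈ OutS n k S) {j : ℕ} :
    j ∈ OutS n k (Sr S r) ↔ j ≠ r ∧ j ∈ OutS n k S := by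
  obtain ⟨⟨hr1, hrk⟩, hpar, hgap⟩ := mem_OutS_iff.mp hr
  simp only [mem_OutS_iff]
  by_cases hj : 1 ≤ j ∧ j ≤ k
  · rw [elt_Sr hS hr hj.1 hj.2, nxt_Sr hS hr hj.1 hj.2]
    by_cases hjr : j + 1 = r
    · have := elt_lt_elt (card_of_mem_Sset hS) hj.1 (by omega : j < r) hrk
      have : nxt n S j = elt S r := by rw [nxt_of_lt hS (by omega), hjr]
      split_ifs <;> omega
    · split_ifs <;> omega
  · tauto

lemma OutS_Sr (hS : S ∈ Sset n k) (hr : r ∈ OutS n k S) :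
    OutS n k (Sr S r) = (OutS n k S).erase r := by
  ext j
  rw [mem_OutS_Sr hS hr, Finset.mem_erase]

lemma InS_Sr (hS : S ∈ Sset n k) (hr : r ∈ OutS n k S) :
    InS k (Sr S r) = insert r (InS k S) := by
  obtain ⟨⟨hr1, hrk⟩, hpar, hgap⟩ := mem_OutS_iff.mp hr
  ext j
  simp only [Finset.mem_insert, mem_InS_iff]
  by_cases hj : 1 ≤ j ∧ j ≤ k
  · rw [elt_Sr hS hr hj.1 hj.2, prv_Sr hS hr hj.1 hj.2]
    rcases eq_or_ne j r with rfl | hjr'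
    · rw [if_pos rfl, if_neg (by omega)]
      exact iff_of_true ⟨hj, by omega, by linarith [prv_lt_elt hS hr1 hrk]⟩ (Or.inl rfl)
    by_cases hjr : j = r + 1
    · have := elt_lt_elt (card_of_mem_Sset hS) hr1 (by omega : r < j) hj.2
      have : prv S j = elt S r := by rw [prv_of_one_lt (by omega), hjr, Nat.add_sub_cancel]
      split_ifs <;> omega
    · split_ifs <;> omega
  · constructor
    · tauto
    · rintro (rfl | h) <;> tauto

lemma elt_add_one_notMem (hS : S ∈ Sset n k) (hr : r ∈ OutS n k S) : elt S r + 1 ∉ S := by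
  obtain ⟨⟨hr1, hrk⟩, -, hgap⟩ := mem_OutS_iff.mp hr
  intro hmem
  obtain ⟨j, hj1, hjk, hj⟩ := exists_elt_eq_of_mem (card_of_mem_Sset hS) hmem
  rcases lt_or_ge r j with h | h
  · linarith [nxt_le_elt hS h hjk]
  · linarith [elt_le_elt (card_of_mem_Sset hS) hj1 h hrk]

lemma Sr_Sr_comm (hS : S ∈ Sset n k) {i : ℕ} (hr : r ∈ OutS n k S) (hi : i ∈ OutS n k S)
    (hir : i ≠ r) : Sr (Sr S r) i = Sr (Sr S i) r := by
  obtain ⟨hr1, hrk⟩ := (mem_OutS_iff.mp hr).1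
  obtain ⟨hi1, hik⟩ := (mem_OutS_iff.mp hi).1
  have hbS := elt_mem (card_of_mem_Sset hS) hi1 hik
  have haS := elt_mem (card_of_mem_Sset hS) hr1 hrk
  have hb : elt S i ≠ elt S r + 1 := fun h => elt_add_one_notMem hS hr (h ▸ hbS)
  have ha : elt S r ≠ elt S i + 1 := fun h => elt_add_one_notMem hS hi (h ▸ haS)
  have e1 : elt (Sr S r) i = elt S i := by rw [elt_Sr hS hr hi1 hik, if_neg hir]
  have e2 : elt (Sr S i) r = elt S r := by rw [elt_Sr hS hi hr1 hrk, if_neg hir.symm]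
  simp only [Sr] at e1 e2 ⊢
  rw [e1, e2, Finset.erase_insert_of_ne hb.symm, Finset.erase_insert_of_ne ha.symm,
    Finset.insert_comm, Finset.erase_right_comm]

end Raise

def lower (S : Finset ℕ) (r : ℕ) : Finset ℕ := insert (elt S r - 1) (S.erase (elt S r))

section Lower

variable {n k r : ℕ} {T : Finset ℕ}

lemma elt_sub_one_notMem (hT : T ∈ Sset n k) (hr : r ∈ InS k T) : elt T r - 1 ∉ T := by
  obtain ⟨⟨hr1, hrk⟩, -, hgap⟩ := mem_InS_iff.mp hr
  intro hmem
  obtain ⟨j, hj1, hjk, hj⟩ := exists_elt_eq_of_mem (card_of_mem_Sset hT) hmem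
  rcases lt_or_ge j r with h | h
  · have := elt_le_prv hT hj1 h hrk
    omega
  · have := elt_le_elt (card_of_mem_Sset hT) hr1 h hjk
    omega

lemma lower_spec (hT : T ∈ Sset n k) (hr : r ∈ InS k T) :
    lower T r ∈ Sset n k ∧
      ∀ i, 1 ≤ i → i ≤ k →
        elt (lower T r) i = if i = r then elt T r - 1 else elt T i := by
  obtain ⟨⟨h1, h2⟩, -, hgap⟩ := mem_InS_iff.mp hr
  have := elt_lt_nxt hT h1 h2
  exact insert_erase_elt_spec hT h1 h2 (by omega) (by omega)

lemma lower_mem_Sset (hT : T ∈ Sset n k) (hr : r ∈ InS k T) : lower T r ∈ Sset n k :=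
  (lower_spec hT hr).1

lemma mem_OutS_lower (hT : T ∈ Sset n k) (hr : r ∈ InS k T) : r ∈ OutS n k (lower T r) := by
  obtain ⟨⟨h1, h2⟩, hpar, hgap⟩ := mem_InS_iff.mp hr
  obtain ⟨hW, helt⟩ := lower_spec hT hr
  have hnxt : nxt n (lower T r) r = nxt n T r := by
    rcases h2.lt_or_eq with h | rfl
    · rw [nxt_of_lt hW h, nxt_of_lt hT h, helt _ (by omega) h, if_neg (by omega)]
    · rw [nxt_last hW, nxt_last hT]
  have := elt_lt_nxt hT h1 h2
  rw [mem_OutS_iff, hnxt, helt r h1 h2, if_pos rfl]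
  exact ⟨⟨h1, h2⟩, by omega, by omega⟩

lemma Sr_lower (hT : T ∈ Sset n k) (hr : r ∈ InS k T) : Sr (lower T r) r = T := by
  obtain ⟨⟨h1, h2⟩, -, hgap⟩ := mem_InS_iff.mp hr
  have haT := elt_mem (card_of_mem_Sset hT) h1 h2
  rw [Sr, (lower_spec hT hr).2 r h1 h2, if_pos rfl, Nat.sub_add_cancel (by omega), lower,
    Finset.erase_insert (fun h => elt_sub_one_notMem hT hr (Finset.mem_of_mem_erase h)),
    Finset.insert_erase haT]

lemma lower_Sr {S : Finset ℕ} (hS : S ∈ Sset n k) (hr : r ∈ OutS n k S) :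
    lower (Sr S r) r = S := by
  obtain ⟨h1, h2⟩ := (mem_OutS_iff.mp hr).1
  rw [lower, elt_Sr hS hr h1 h2, if_pos rfl, Nat.add_sub_cancel, Sr,
    Finset.erase_insert (fun h => elt_add_one_notMem hS hr (Finset.mem_of_mem_erase h)),
    Finset.insert_erase (elt_mem (card_of_mem_Sset hS) h1 h2)]

end Lower

section Matching

variable {n k : ℕ} {S T : Finset ℕ}

def IsMinOut (n k : ℕ) (S : Finset ℕ) : Prop :=
  ∃ i ∈ OutS n k S, ∀ j ∈ InS k S ∪ OutS n k S, i ≤ j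

def IsMinIn (n k : ℕ) (S : Finset ℕ) : Prop :=
  ∃ i ∈ InS k S, ∀ j ∈ InS k S ∪ OutS n k S, i ≤ j

/-- `min (In(S) ∪ Out(S))`, with junk value `0` when `In(S) = ∅ = Out(S)`. -/
noncomputable def pivot (n k : ℕ) (S : Finset ℕ) : ℕ :=
  if h : (InS k S ∪ OutS n k S).Nonempty then (InS k S ∪ OutS n k S).min' h else 0

lemma pivot_le {j : ℕ} (hj : j ∈ InS k S ∪ OutS n k S) : pivot n k S ≤ j := by
  rw [pivot, dif_pos ⟨j, hj⟩]
  exact Finset.min'_le _ _ hj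

lemma pivot_eq {i : ℕ} (hi : i ∈ InS k S ∪ OutS n k S)
    (hmin : ∀ j ∈ InS k S ∪ OutS n k S, i ≤ j) : pivot n k S = i :=
  le_antisymm (pivot_le hi) (hmin _ (by rw [pivot, dif_pos ⟨i, hi⟩]; exact Finset.min'_mem _ _))

lemma pivot_congr {S' : Finset ℕ} (h : InS k S ∪ OutS n k S = InS k S' ∪ OutS n k S') :
    pivot n k S = pivot n k S' := by
  simp only [pivot, h]

lemma IsMinOut.pivot_mem (h : IsMinOut n k S) : pivot n k S ∈ OutS n k S := by
  obtain ⟨i, hi, hmin⟩ := h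
  rwa [pivot_eq (Finset.mem_union_right _ hi) hmin]

lemma IsMinIn.pivot_mem (h : IsMinIn n k S) : pivot n k S ∈ InS k S := by
  obtain ⟨i, hi, hmin⟩ := h
  rwa [pivot_eq (Finset.mem_union_left _ hi) hmin]

lemma IsMinOut.not_isMinIn (h : IsMinOut n k S) : ¬ IsMinIn n k S := fun h' =>
  notMem_InS_of_mem_OutS h.pivot_mem h'.pivot_mem

lemma isFree_or_isMinOut_or_isMinIn (S : Finset ℕ) :
    (InS k S = ∅ ∧ OutS n k S = ∅) ∨ IsMinOut n k S ∨ IsMinIn n k S := by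
  by_cases hne : (InS k S ∪ OutS n k S).Nonempty
  · have hmin := fun j hj => Finset.min'_le (InS k S ∪ OutS n k S) j hj
    rcases Finset.mem_union.mp (Finset.min'_mem _ hne) with h | h
    · exact Or.inr (Or.inr ⟨_, h, hmin⟩)
    · exact Or.inr (Or.inl ⟨_, h, hmin⟩)
  · exact Or.inl (Finset.union_eq_empty.mp (Finset.not_nonempty_iff_eq_empty.mp hne))

lemma InS_union_OutS_Sr (hS : S ∈ Sset n k) {r : ℕ} (hr : r ∈ OutS n k S) :
    InS k (Sr S r) ∪ OutS n k (Sr S r) = InS k S ∪ OutS n k S := by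
  rw [InS_Sr hS hr, OutS_Sr hS hr, Finset.insert_union, ← Finset.union_insert,
    Finset.insert_erase hr]

lemma InS_union_OutS_lower (hT : T ∈ Sset n k) {r : ℕ} (hr : r ∈ InS k T) :
    InS k (lower T r) ∪ OutS n k (lower T r) = InS k T ∪ OutS n k T := by
  rw [← InS_union_OutS_Sr (lower_mem_Sset hT hr) (mem_OutS_lower hT hr), Sr_lower hT hr]

lemma IsMinOut.Sr_of_ne (hS : S ∈ Sset n k) (h : IsMinOut n k S) {r : ℕ}
    (hr : r ∈ OutS n k S) (hne : r ≠ pivot n k S) : IsMinOut n k (Sr S r) := by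
  refine ⟨pivot n k S, ?_, fun j hj => pivot_le ?_⟩
  · rw [OutS_Sr hS hr]
    exact Finset.mem_erase.mpr ⟨hne.symm, h.pivot_mem⟩
  · rwa [InS_union_OutS_Sr hS hr] at hj

noncomputable def matchUp (n k : ℕ) (S : Finset ℕ) : Finset ℕ := Sr S (pivot n k S)

noncomputable def matchDown (n k : ℕ) (T : Finset ℕ) : Finset ℕ := lower T (pivot n k T)

lemma IsMinOut.matchUp_mem_Sset (hS : S ∈ Sset n k) (h : IsMinOut n k S) :
    matchUp n k S ∈ Sset n k :=
  Sr_mem_Sset hS h.pivot_mem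

lemma IsMinOut.dS_matchUp (hS : S ∈ Sset n k) (h : IsMinOut n k S) :
    dS (matchUp n k S) = dS S + 1 :=
  dS_Sr hS h.pivot_mem

lemma IsMinOut.isMinIn_matchUp (hS : S ∈ Sset n k) (h : IsMinOut n k S) :
    IsMinIn n k (matchUp n k S) := by
  refine ⟨pivot n k S, ?_, fun j hj => pivot_le ?_⟩
  · rw [matchUp, InS_Sr hS h.pivot_mem]
    exact Finset.mem_insert_self _ _
  · rwa [matchUp, InS_union_OutS_Sr hS h.pivot_mem] at hj

lemma IsMinOut.matchDown_matchUp (hS : S ∈ Sset n k) (h : IsMinOut n k S) :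
    matchDown n k (matchUp n k S) = S := by
  rw [matchDown, matchUp, pivot_congr (InS_union_OutS_Sr hS h.pivot_mem), lower_Sr hS h.pivot_mem]

lemma IsMinIn.matchDown_mem_Sset (hT : T ∈ Sset n k) (h : IsMinIn n k T) :
    matchDown n k T ∈ Sset n k :=
  lower_mem_Sset hT h.pivot_mem

lemma IsMinIn.isMinOut_matchDown (hT : T ∈ Sset n k) (h : IsMinIn n k T) :
    IsMinOut n k (matchDown n k T) := by
  refine ⟨pivot n k T, mem_OutS_lower hT h.pivot_mem, fun j hj => pivot_le ?_⟩
  rwa [matchDown, InS_union_OutS_lower hT h.pivot_mem] at hj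

lemma IsMinIn.pivot_matchDown (hT : T ∈ Sset n k) (h : IsMinIn n k T) :
    pivot n k (matchDown n k T) = pivot n k T :=
  pivot_congr (InS_union_OutS_lower hT h.pivot_mem)

lemma IsMinIn.matchUp_matchDown (hT : T ∈ Sset n k) (h : IsMinIn n k T) :
    matchUp n k (matchDown n k T) = T := by
  rw [matchUp, h.pivot_matchDown hT, matchDown, Sr_lower hT h.pivot_mem]

lemma IsMinIn.dS_matchDown (hT : T ∈ Sset n k) (h : IsMinIn n k T) :
    dS T = dS (matchDown n k T) + 1 := by
  conv_lhs => rw [← h.matchUp_matchDown hT]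
  exact (h.isMinOut_matchDown hT).dS_matchUp (h.matchDown_mem_Sset hT)

lemma IsMinOut.not_free (h : IsMinOut n k S) : ¬ (InS k S = ∅ ∧ OutS n k S = ∅) :=
  fun hS => by simpa [hS.2] using h.pivot_mem

lemma IsMinIn.not_free (h : IsMinIn n k S) : ¬ (InS k S = ∅ ∧ OutS n k S = ∅) :=
  fun hS => by simpa [hS.1] using h.pivot_mem

lemma mem_Dfin {m : ℕ} {S : Finset ℕ} : S ∈ Dfin n k m ↔ S ∈ Sset n k ∧ dS S = m :=
  Finset.mem_filter

lemma IsMinOut.matchUp_mem_Dfin {m : ℕ} {S : Finset ℕ} (h : IsMinOut n k S)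
    (hSm : S ∈ Dfin n k m) : matchUp n k S ∈ Dfin n k (m + 1) := by
  obtain ⟨hS, rfl⟩ := mem_Dfin.mp hSm
  exact mem_Dfin.mpr ⟨h.matchUp_mem_Sset hS, h.dS_matchUp hS⟩

lemma IsMinIn.matchDown_mem_Dfin {m : ℕ} {T : Finset ℕ} (h : IsMinIn n k T)
    (hTm : T ∈ Dfin n k (m + 1)) : matchDown n k T ∈ Dfin n k m := by
  obtain ⟨hT, hdT⟩ := mem_Dfin.mp hTm
  exact mem_Dfin.mpr ⟨h.matchDown_mem_Sset hT, by linarith [h.dS_matchDown hT]⟩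

end Matching

section HalfDifferential

variable {n k : ℕ} {R : Type*} [CommRing R] {S : Finset ℕ}

variable (n k R) in
/-- The coefficient of `T` in `q(S)`. -/
noncomputable def halfCoeff (T S : Finset ℕ) : R :=
  ∑ r ∈ Finset.Icc 1 k, if r ∈ OutS n k S ∧ T = Sr S r then (-1 : R) ^ dr S r else 0

lemma schubCoeff_eq_two_mul_halfCoeff (T S : Finset ℕ) :
    schubCoeff n k R T S = 2 * halfCoeff n k R T S := by
  rw [schubCoeff, halfCoeff, Finset.mul_sum]
  refine Finset.sum_congr rfl fun r hr => ?_
  have hcond : (1 < nxt n S r - elt S r ∧ Odd ((k : ℤ) - elt S r) ∧ T = Sr S r) ↔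
      (r ∈ OutS n k S ∧ T = Sr S r) := by
    rw [mem_OutS_iff, Int.odd_iff, ← and_assoc, ← and_assoc]
    exact and_congr_left fun _ => by simp only [Finset.mem_Icc.mp hr, true_and]; omega
  rw [if_congr hcond rfl rfl, mul_ite, mul_zero, mul_comm]

lemma halfCoeff_eq_zero_of_OutS_eq_empty (h : OutS n k S = ∅) (T : Finset ℕ) :
    halfCoeff n k R T S = 0 :=
  Finset.sum_eq_zero fun r _ => by simp [h]

lemma sum_mul_halfCoeff {W : Finset ℕ} {D : Finset (Finset ℕ)}
    (hD : ∀ r ∈ OutS n k W, Sr W r ∈ D) (g : Finset ℕ → R) :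
    ∑ T ∈ D, g T * halfCoeff n k R T W =
      ∑ r ∈ Finset.Icc 1 k, if r ∈ OutS n k W then g (Sr W r) * (-1 : R) ^ dr W r else 0 := by
  simp_rw [halfCoeff, Finset.mul_sum]
  rw [Finset.sum_comm]
  refine Finset.sum_congr rfl fun r _ => ?_
  by_cases hr : r ∈ OutS n k W
  · simp [hr, hD r hr]
  · simp [hr]

/-- `q(q(W)) = 0`: its terms cancel in pairs, as raising `s_r` and then `s_i` gives the same set
as raising `s_i` and then `s_r`, with the opposite sign. -/
lemma sum_halfCoeff_Sr_mul_eq_zero {W : Finset ℕ} (hW : W ∈ Sset n k) (U : Finset ℕ) :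
    ∑ r ∈ Finset.Icc 1 k,
      (if r ∈ OutS n k W then halfCoeff n k R U (Sr W r) * (-1 : R) ^ dr W r else 0) = 0 := by
  set f : ℕ × ℕ → R := fun p =>
    if p.1 ∈ OutS n k W ∧ p.2 ∈ OutS n k (Sr W p.1) ∧ U = Sr (Sr W p.1) p.2 then
      (-1) ^ dr (Sr W p.1) p.2 * (-1) ^ dr W p.1 else 0 with hf
  have hterm : ∀ r ∈ Finset.Icc 1 k,
      (if r ∈ OutS n k W then halfCoeff n k R U (Sr W r) * (-1 : R) ^ dr W r else 0) =
        ∑ i ∈ Finset.Icc 1 k, f (r, i) := by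
    intro r _
    by_cases hr : r ∈ OutS n k W
    · simp [hf, hr, halfCoeff, Finset.sum_mul, ite_mul]
    · simp [hf, hr]
  have hswap : ∀ {r i : ℕ}, r ∈ OutS n k W → i ∈ OutS n k (Sr W r) →
      U = Sr (Sr W r) i →
      i ∈ OutS n k W ∧ r ∈ OutS n k (Sr W i) ∧ U = Sr (Sr W i) r ∧ i ≠ r := by
    intro r i hr hi hU
    obtain ⟨hir, hi⟩ := (mem_OutS_Sr hW hr).mp hi
    exact ⟨hi, (mem_OutS_Sr hW hi).mpr ⟨hir.symm, hr⟩, hU.trans (Sr_Sr_comm hW hr hi hir),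
      hir⟩
  rw [Finset.sum_congr rfl hterm, ← Finset.sum_product']
  refine Finset.sum_involution (fun p _ => p.swap) ?_ ?_ (fun p hp => Finset.mem_product.mpr
    ⟨(Finset.mem_product.mp hp).2, (Finset.mem_product.mp hp).1⟩) (fun _ _ => rfl)
  · rintro ⟨r, i⟩ -
    simp only [hf, Prod.swap]
    by_cases h : r ∈ OutS n k W ∧ i ∈ OutS n k (Sr W r) ∧ U = Sr (Sr W r) i
    · obtain ⟨hr, hi, hU⟩ := h
      obtain ⟨hi', hr', hU', hir⟩ := hswap hr hi hU
      rw [if_pos ⟨hr, hi, hU⟩, if_pos ⟨hi', hr', hU'⟩,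
        dr_Sr hW hr (mem_OutS_iff.mp hi').1.1,
        dr_Sr hW hi' (mem_OutS_iff.mp hr).1.1]
      rcases hir.lt_or_gt with h | h
      · rw [if_pos h.le, if_neg h.not_ge]
        ring
      · rw [if_neg h.not_ge, if_pos h.le]
        ring
    · rw [if_neg h, zero_add]
      refine if_neg fun ⟨hi, hr, hU⟩ => ?_
      obtain ⟨hr', hi', hU', -⟩ := hswap hi hr hU
      exact h ⟨hr', hi', hU'⟩
  · rintro ⟨r, i⟩ - hne heq
    simp only [Prod.swap_prod_mk, Prod.mk.injEq] at heq
    obtain rfl := heq.1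
    refine hne (if_neg fun ⟨hr, hi, _⟩ => ?_)
    exact ((mem_OutS_Sr hW hr).mp hi).1 rfl

lemma IsMinOut.halfCoeff_of_isMinIn {W U : Finset ℕ} (hW : W ∈ Sset n k) (h : IsMinOut n k W)
    (hU : IsMinIn n k U) :
    halfCoeff n k R U W = if U = matchUp n k W then (-1 : R) ^ dr W (pivot n k W) else 0 := by
  have hp := h.pivot_mem
  rw [halfCoeff, Finset.sum_eq_single (pivot n k W)]
  · by_cases hUp : U = matchUp n k W
    · rw [if_pos ⟨hp, hUp⟩, if_pos hUp]
    · rw [if_neg fun h => hUp h.2, if_neg hUp]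
  · rintro r - hne
    refine if_neg fun ⟨hr, hUr⟩ => ?_
    exact (h.Sr_of_ne hW hr hne).not_isMinIn (hUr ▸ hU)
  · exact fun hnot => absurd (Finset.mem_Icc.mpr (mem_OutS_iff.mp hp).1) hnot

end HalfDifferential

section ChangeOfBasis

variable (n k : ℕ) (R : Type*) [CommRing R]

/-- The sign `(-1)^{d_p(S)}` of `S_p` in `q(S)`, where `p = pivot S`. -/
noncomputable def pivotSign (S : Finset ℕ) : R := (-1 : R) ^ dr S (pivot n k S)

/-- The sign makes the `T`-entry of column `T` equal to `1`, so that `basisChange - 1` squares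
to zero. -/
noncomputable def basisChange (m : ℕ) : Matrix (Dfin n k m) (Dfin n k m) R := fun U T =>
  if IsMinIn n k T.1 then
    pivotSign n k R (matchDown n k T.1) * halfCoeff n k R U.1 (matchDown n k T.1)
  else (1 : Matrix (Dfin n k m) (Dfin n k m) R) U T

/-- The differential in the new basis. -/
noncomputable def pairedMatrix (m : ℕ) : Matrix (Dfin n k (m + 1)) (Dfin n k m) R := fun T S =>
  if IsMinOut n k S.1 ∧ T.1 = matchUp n k S.1 then 2 * pivotSign n k R S.1 else 0

variable {n k R}

lemma pivotSign_mul_self (S : Finset ℕ) : pivotSign n k R S * pivotSign n k R S = 1 := by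
  rw [pivotSign, ← pow_add, ← two_mul, pow_mul, neg_one_sq, one_pow]

lemma basisChange_sub_one_apply {m : ℕ} (U T : Dfin n k m)
    (h : IsMinIn n k U.1 ∨ ¬ IsMinIn n k T.1) : (basisChange n k R m - 1) U T = 0 := by
  rw [Matrix.sub_apply, basisChange, sub_eq_zero]
  split_ifs with hT
  · obtain ⟨hTS, -⟩ := mem_Dfin.mp T.2
    have hW := hT.isMinOut_matchDown hTS
    rw [hW.halfCoeff_of_isMinIn (hT.matchDown_mem_Sset hTS) (h.resolve_right (not_not.mpr hT)),
      hT.matchUp_matchDown hTS, Matrix.one_apply]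
    by_cases hUT : U = T
    · rw [if_pos (congrArg Subtype.val hUT), if_pos hUT, ← pivotSign, pivotSign_mul_self]
    · rw [if_neg (fun h => hUT (Subtype.ext h)), if_neg hUT, mul_zero]
  · rfl

lemma basisChange_mul_two_sub (m : ℕ) :
    basisChange n k R m * (2 - basisChange n k R m) = 1 ∧
      (2 - basisChange n k R m) * basisChange n k R m = 1 := by
  have hN := (basisChange n k R m - 1).mul_self_eq_zero_of_apply_eq_zero
    (fun U => IsMinIn n k U.1) basisChange_sub_one_apply
  constructor <;> linear_combination (norm := noncomm_ring) -hN

variable (n k R) in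
noncomputable def basisChangeEquiv (m : ℕ) : Cgr n k R m ≃ₗ[R] Cgr n k R m :=
  LinearEquiv.ofLinearMap (Matrix.mulVecLin (basisChange n k R m))
    (Matrix.mulVecLin (2 - basisChange n k R m))
    (by rw [← Matrix.mulVecLin_mul, (basisChange_mul_two_sub m).1, Matrix.mulVecLin_one])
    (by rw [← Matrix.mulVecLin_mul, (basisChange_mul_two_sub m).2, Matrix.mulVecLin_one])

lemma mul_pairedMatrix_apply_of_not_isMinOut {m : ℕ} {S : Dfin n k m} (h : ¬ IsMinOut n k S.1)
    (A : Matrix (Dfin n k (m + 1)) (Dfin n k (m + 1)) R) (U : Dfin n k (m + 1)) :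
    (A * pairedMatrix n k R m) U S = 0 := by
  rw [Matrix.mul_apply]
  exact Finset.sum_eq_zero fun T _ => by
    rw [show pairedMatrix n k R m T S = 0 from if_neg fun h' => h h'.1, mul_zero]

variable (n k R) in
noncomputable def schubMatrix (m : ℕ) : Matrix (Dfin n k (m + 1)) (Dfin n k m) R :=
  fun T S => schubCoeff n k R T.1 S.1

lemma schubMatrix_mul_basisChange_apply_of_not_isMinIn {m : ℕ} {S : Dfin n k m}
    (h : ¬ IsMinIn n k S.1) (U : Dfin n k (m + 1)) :
    (schubMatrix n k R m * basisChange n k R m) U S = 2 * halfCoeff n k R U.1 S.1 := by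
  have hcol : ∀ T, basisChange n k R m T S = (1 : Matrix (Dfin n k m) (Dfin n k m) R) T S :=
    fun _ => if_neg h
  simp_rw [Matrix.mul_apply, hcol, ← Matrix.mul_apply, Matrix.mul_one]
  exact schubCoeff_eq_two_mul_halfCoeff _ _

lemma schubMatrix_mul_basisChange (m : ℕ) :
    schubMatrix n k R m * basisChange n k R m =
      basisChange n k R (m + 1) * pairedMatrix n k R m := by
  ext U S
  obtain ⟨hS, hdS⟩ := mem_Dfin.mp S.2
  rcases isFree_or_isMinOut_or_isMinIn (n := n) (k := k) S.1 with hfree | hmo | hmi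
  · rw [schubMatrix_mul_basisChange_apply_of_not_isMinIn fun h => h.not_free hfree,
      halfCoeff_eq_zero_of_OutS_eq_empty hfree.2, mul_zero,
      mul_pairedMatrix_apply_of_not_isMinOut fun h => h.not_free hfree]
  · have hP := hmo.matchUp_mem_Dfin S.2
    rw [schubMatrix_mul_basisChange_apply_of_not_isMinIn hmo.not_isMinIn, Matrix.mul_apply,
      Fintype.sum_eq_single ⟨_, hP⟩ fun T hT => by
        rw [pairedMatrix, if_neg fun h => hT (Subtype.ext h.2), mul_zero]]
    rw [pairedMatrix, if_pos ⟨hmo, rfl⟩, basisChange, if_pos (hmo.isMinIn_matchUp hS),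
      hmo.matchDown_matchUp hS]
    linear_combination
      (2 * halfCoeff n k R U.1 S.1) * (pivotSign_mul_self (n := n) (k := k) (R := R) S.1).symm
  · set W := matchDown n k S.1
    have hW := hmi.matchDown_mem_Sset hS
    have hD : ∀ r ∈ OutS n k W, Sr W r ∈ Dfin n k m := fun r hr =>
      mem_Dfin.mpr ⟨Sr_mem_Sset hW hr, by rw [dS_Sr hW hr, ← hmi.dS_matchDown hS, hdS]⟩
    rw [mul_pairedMatrix_apply_of_not_isMinOut fun h => h.not_isMinIn hmi, Matrix.mul_apply]
    calc ∑ T, schubMatrix n k R m U T * basisChange n k R m T S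
        = 2 * pivotSign n k R W *
            ∑ T ∈ Dfin n k m, halfCoeff n k R U.1 T * halfCoeff n k R T W := by
          rw [Finset.mul_sum, ← Finset.sum_coe_sort (Dfin n k m)]
          refine Finset.sum_congr rfl fun T _ => ?_
          rw [schubMatrix, basisChange, if_pos hmi, schubCoeff_eq_two_mul_halfCoeff]
          ring
      _ = 0 := by rw [sum_mul_halfCoeff hD, sum_halfCoeff_Sr_mul_eq_zero hW, mul_zero]

end ChangeOfBasis

section PairedComplex

variable {n k : ℕ} {R : Type*} [CommRing R]

lemma two_apply (r : R) : two R r = 2 * r := by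
  rw [two, LinearMap.lsmul_apply, smul_eq_mul]

variable (n k R) in
noncomputable def pairedDiff (m : ℕ) : Cgr n k R m →ₗ[R] Cgr n k R (m + 1) :=
  Matrix.mulVecLin (pairedMatrix n k R m)

lemma schubDeltaGr_comp_basisChangeEquiv (m : ℕ) :
    schubDeltaGr n k R m ∘ₗ (basisChangeEquiv n k R m : Cgr n k R m →ₗ[R] Cgr n k R m) =
      (basisChangeEquiv n k R (m + 1) : Cgr n k R (m + 1) →ₗ[R] Cgr n k R (m + 1)) ∘ₗ
        pairedDiff n k R m := by
  change Matrix.mulVecLin (schubMatrix n k R m) ∘ₗ Matrix.mulVecLin (basisChange n k R m) =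
    Matrix.mulVecLin (basisChange n k R (m + 1)) ∘ₗ Matrix.mulVecLin (pairedMatrix n k R m)
  rw [← Matrix.mulVecLin_mul, ← Matrix.mulVecLin_mul, schubMatrix_mul_basisChange]

lemma pairedDiff_apply {m : ℕ} (v : Cgr n k R m) (T : Dfin n k (m + 1)) :
    pairedDiff n k R m v T = if h : IsMinIn n k T.1 then
      2 * pivotSign n k R (matchDown n k T.1) * v ⟨_, h.matchDown_mem_Dfin T.2⟩ else 0 := by
  obtain ⟨hT, -⟩ := mem_Dfin.mp T.2
  have hiff : ∀ S : Dfin n k m, IsMinOut n k S.1 ∧ T.1 = matchUp n k S.1 ↔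
      IsMinIn n k T.1 ∧ S.1 = matchDown n k T.1 := by
    intro S
    constructor
    · rintro ⟨hS, hTS⟩
      rw [hTS]
      have hS' := (mem_Dfin.mp S.2).1
      exact ⟨hS.isMinIn_matchUp hS', (hS.matchDown_matchUp hS').symm⟩
    · rintro ⟨hT', hST⟩
      rw [hST]
      exact ⟨hT'.isMinOut_matchDown hT, (hT'.matchUp_matchDown hT).symm⟩
  rw [pairedDiff, Matrix.mulVecLin_apply, Matrix.mulVec, dotProduct]
  simp only [pairedMatrix, ite_mul, zero_mul, if_congr (hiff _) rfl rfl]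
  split_ifs with h
  · rw [Fintype.sum_eq_single ⟨_, h.matchDown_mem_Dfin T.2⟩ fun S hS => if_neg fun h' =>
      hS (Subtype.ext h'.2)]
    simp [h]
  · exact Finset.sum_eq_zero fun S _ => if_neg fun h' => h h'.1

lemma mem_ker_pairedDiff {m : ℕ} {v : Cgr n k R m} :
    v ∈ LinearMap.ker (pairedDiff n k R m) ↔
      ∀ S : Dfin n k m, IsMinOut n k S.1 → 2 * v S = 0 := by
  rw [LinearMap.mem_ker]
  constructor
  · intro hv S hS
    obtain ⟨hSS, -⟩ := mem_Dfin.mp S.2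
    have hT := congrFun hv ⟨_, hS.matchUp_mem_Dfin S.2⟩
    have hST : (⟨_, (hS.isMinIn_matchUp hSS).matchDown_mem_Dfin (hS.matchUp_mem_Dfin S.2)⟩ :
        Dfin n k m) = S := Subtype.ext (hS.matchDown_matchUp hSS)
    rw [pairedDiff_apply, dif_pos (hS.isMinIn_matchUp hSS), hST, hS.matchDown_matchUp hSS,
      Pi.zero_apply] at hT
    linear_combination pivotSign n k R S.1 * hT -
      2 * v S * pivotSign_mul_self (n := n) (k := k) (R := R) S.1
  · intro hv
    funext T
    rw [pairedDiff_apply, Pi.zero_apply]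
    split_ifs with h
    · linear_combination pivotSign n k R (matchDown n k T.1) *
        hv ⟨_, h.matchDown_mem_Dfin T.2⟩ (h.isMinOut_matchDown (mem_Dfin.mp T.2).1)
    · rfl

variable (n k R) in
noncomputable def pairedBoundaries (m : ℕ) : Submodule R (Cgr n k R m) :=
  ⨅ T : Dfin n k m,
    (if IsMinIn n k T.1 then LinearMap.range (two R) else ⊥).comap (LinearMap.proj T)

lemma mem_pairedBoundaries_iff {m : ℕ} {w : Cgr n k R m} :
    w ∈ pairedBoundaries n k R m ↔
      ∀ T : Dfin n k m, w T ∈ if IsMinIn n k T.1 then LinearMap.range (two R) else ⊥ := by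
  simp [pairedBoundaries, Submodule.mem_iInf]

lemma range_pairedDiff (m : ℕ) :
    LinearMap.range (pairedDiff n k R m) = pairedBoundaries n k R (m + 1) := by
  ext w
  rw [LinearMap.mem_range, mem_pairedBoundaries_iff]
  constructor
  · rintro ⟨v, rfl⟩ T
    rw [pairedDiff_apply]
    split_ifs with h
    · exact ⟨_, (two_apply _).trans (mul_assoc _ _ _).symm⟩
    · exact Submodule.zero_mem _
  · intro hw
    have hc : ∀ T : Finset ℕ, ∃ r : R, ∀ hT : T ∈ Dfin n k (m + 1), IsMinIn n k T →
        w ⟨T, hT⟩ = 2 * r := by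
      intro T
      by_cases hT : T ∈ Dfin n k (m + 1) ∧ IsMinIn n k T
      · have := hw ⟨T, hT.1⟩
        rw [if_pos hT.2] at this
        obtain ⟨r, hr⟩ := this
        exact ⟨r, fun _ _ => hr.symm.trans (two_apply r)⟩
      · exact ⟨0, fun h h' => absurd ⟨h, h'⟩ hT⟩
    choose c hc using hc
    refine ⟨fun S => pivotSign n k R S.1 * c (matchUp n k S.1), funext fun T => ?_⟩
    rw [pairedDiff_apply]
    split_ifs with h
    · obtain ⟨hT, -⟩ := mem_Dfin.mp T.2
      simp only [h.matchUp_matchDown hT, hc T.1 T.2 h]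
      linear_combination 2 * c T.1 * pivotSign_mul_self (n := n) (k := k) (R := R) _
    · have := hw T
      rw [if_neg h, Submodule.mem_bot] at this
      exact this.symm

end PairedComplex

section PairedCohomology

variable {n k : ℕ} {R : Type*} [CommRing R]

variable (n k R) in
/-- Reads off the summands `V_S` of a cocycle of `pairedDiff`. -/
noncomputable def pairedCocycleMap (m : ℕ) :
    LinearMap.ker (pairedDiff n k R m) →ₗ[R]
      ((↥(freeIdxGr n k m) → R) × (↥(minOutIdxGr n k m) → ↥(LinearMap.ker (two R))) ×
        (↥(minInIdxGr n k m) → R ⧸ LinearMap.range (two R))) :=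
  LinearMap.prod
    (LinearMap.pi fun S =>
      LinearMap.proj ⟨S.1, (Finset.mem_filter.mp S.2).1⟩ ∘ₗ Submodule.subtype _)
    (LinearMap.prod
      (LinearMap.pi fun S => LinearMap.codRestrict _
        (LinearMap.proj ⟨S.1, (Finset.mem_filter.mp S.2).1⟩ ∘ₗ Submodule.subtype _)
        fun x => by
          rw [LinearMap.mem_ker, LinearMap.comp_apply, two_apply]
          exact mem_ker_pairedDiff.mp x.2 _ (Finset.mem_filter.mp S.2).2)
      (LinearMap.pi fun S => (LinearMap.range (two R)).mkQ ∘ₗ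
        LinearMap.proj ⟨S.1, (Finset.mem_filter.mp S.2).1⟩ ∘ₗ Submodule.subtype _))

lemma pairedCocycleMap_surjective (m : ℕ) : Function.Surjective (pairedCocycleMap n k R m) := by
  rintro ⟨a, b, c⟩
  let x : Cgr n k R m := fun S =>
    if h : S.1 ∈ freeIdxGr n k m then a ⟨_, h⟩
    else if h : S.1 ∈ minOutIdxGr n k m then b ⟨_, h⟩
    else if h : S.1 ∈ minInIdxGr n k m then (c ⟨_, h⟩).out else 0
  have hfree {S : Finset ℕ} (h : IsMinOut n k S ∨ IsMinIn n k S) : S ∉ freeIdxGr n k m :=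
    fun hS => h.elim (·.not_free (Finset.mem_filter.mp hS).2)
      (·.not_free (Finset.mem_filter.mp hS).2)
  have hx : x ∈ LinearMap.ker (pairedDiff n k R m) := by
    refine mem_ker_pairedDiff.mpr fun S hS => ?_
    have hS' : S.1 ∈ minOutIdxGr n k m := Finset.mem_filter.mpr ⟨S.2, hS⟩
    have := (b ⟨_, hS'⟩).2
    rw [LinearMap.mem_ker, two_apply] at this
    simpa only [x, dif_neg (hfree (.inl hS)), dif_pos hS'] using this
  refine ⟨⟨x, hx⟩, Prod.ext (funext fun S => ?_)
    (Prod.ext (funext fun S => ?_) (funext fun S => ?_))⟩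
  · exact dif_pos S.2
  · refine Subtype.ext ?_
    change x _ = _
    simp only [x, dif_neg (hfree (.inl (Finset.mem_filter.mp S.2).2)), dif_pos S.2]
  · have hS : IsMinIn n k S.1 := (Finset.mem_filter.mp S.2).2
    have hS' : S.1 ∉ minOutIdxGr n k m := fun h =>
      IsMinOut.not_isMinIn (Finset.mem_filter.mp h).2 hS
    change Submodule.Quotient.mk (x _) = c S
    simp only [x, dif_neg (hfree (.inr hS)), dif_neg hS', dif_pos S.2, Submodule.Quotient.mk_out]

lemma ker_pairedCocycleMap (m : ℕ) : LinearMap.ker (pairedCocycleMap n k R m) =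
    (pairedBoundaries n k R m).comap (LinearMap.ker (pairedDiff n k R m)).subtype := by
  ext x
  simp only [LinearMap.mem_ker, Submodule.mem_comap, mem_pairedBoundaries_iff, Prod.ext_iff,
    funext_iff, Subtype.ext_iff, pairedCocycleMap, LinearMap.prod_apply, Function.prod_apply,
    LinearMap.pi_apply, LinearMap.comp_apply, LinearMap.codRestrict_apply, LinearMap.coe_proj,
    Function.eval, Submodule.mkQ_apply, Submodule.subtype_apply, Prod.fst_zero, Prod.snd_zero,
    Pi.zero_apply, ZeroMemClass.coe_zero, Submodule.Quotient.mk_eq_zero]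
  constructor
  · rintro ⟨h1, h2, h3⟩ T
    split_ifs with hT
    · exact h3 ⟨T.1, Finset.mem_filter.mpr ⟨T.2, hT⟩⟩
    · rw [Submodule.mem_bot]
      rcases isFree_or_isMinOut_or_isMinIn (n := n) (k := k) T.1 with hf | ho | hi
      · exact h1 ⟨T.1, Finset.mem_filter.mpr ⟨T.2, hf⟩⟩
      · exact h2 ⟨T.1, Finset.mem_filter.mpr ⟨T.2, ho⟩⟩
      · exact absurd hi hT
  · intro h
    refine ⟨fun S => ?_, fun S => ?_, fun S => ?_⟩
    · have hS := h ⟨S.1, (Finset.mem_filter.mp S.2).1⟩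
      rwa [if_neg fun hi => hi.not_free (Finset.mem_filter.mp S.2).2, Submodule.mem_bot] at hS
    · have hS := h ⟨S.1, (Finset.mem_filter.mp S.2).1⟩
      rwa [if_neg (IsMinOut.not_isMinIn (Finset.mem_filter.mp S.2).2), Submodule.mem_bot] at hS
    · have hS := h ⟨S.1, (Finset.mem_filter.mp S.2).1⟩
      rwa [if_pos (show IsMinIn n k S.1 from (Finset.mem_filter.mp S.2).2)] at hS

variable (n k R) in
noncomputable def pairedCohomologyEquiv (m : ℕ) :
    (LinearMap.ker (pairedDiff n k R m) ⧸
        (pairedBoundaries n k R m).comap (LinearMap.ker (pairedDiff n k R m)).subtype) ≃ₗ[R]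
      ((↥(freeIdxGr n k m) → R) × (↥(minOutIdxGr n k m) → ↥(LinearMap.ker (two R))) ×
        (↥(minInIdxGr n k m) → R ⧸ LinearMap.range (two R))) :=
  (Submodule.quotEquivOfEq _ _ (ker_pairedCocycleMap m).symm).trans
    ((pairedCocycleMap n k R m).quotKerEquivOfSurjective (pairedCocycleMap_surjective m))

end PairedCohomology

section Comparison

variable {n k : ℕ} {R : Type*} [CommRing R]

lemma map_ker_pairedDiff (m : ℕ) :
    (LinearMap.ker (pairedDiff n k R m)).map (basisChangeEquiv n k R m : Cgr n k R m →ₗ[R] _) =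
      LinearMap.ker (schubDeltaGr n k R m) :=
  (ker_eq_map_of_comp_eq (schubDeltaGr_comp_basisChangeEquiv m)).symm

lemma pairedBoundaries_zero : pairedBoundaries n k R 0 = ⊥ := by
  refine eq_bot_iff.mpr fun w hw => ?_
  funext T
  have hT : ¬ IsMinIn n k T.1 := fun h => by
    have := h.dS_matchDown (mem_Dfin.mp T.2).1
    rw [(mem_Dfin.mp T.2).2] at this
    omega
  simpa [hT] using mem_pairedBoundaries_iff.mp hw T

lemma map_pairedBoundaries (m : ℕ) :
    (pairedBoundaries n k R m).map (basisChangeEquiv n k R m : Cgr n k R m →ₗ[R] _) =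
      Bsub n k R m := by
  cases m with
  | zero => rw [pairedBoundaries_zero, Submodule.map_bot]; rfl
  | succ m =>
    rw [← range_pairedDiff, ← range_eq_map_of_comp_eq (schubDeltaGr_comp_basisChangeEquiv m)]
    rfl

end Comparison

theorem stmt6_general (n k : ℕ) (R : Type*) [CommRing R] :
    ∀ m : ℕ, Nonempty (Hgr n k R m ≃ₗ[R]
      ((↥(freeIdxGr n k m) → R) ×
       (↥(minOutIdxGr n k m) → ↥(LinearMap.ker (two R))) ×
       (↥(minInIdxGr n k m) → R ⧸ LinearMap.range (two R)))) := by
  intro m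
  exact ⟨(subquotientEquivOfMapEq (basisChangeEquiv n k R m) (map_ker_pairedDiff m)
    (map_pairedBoundaries m)).symm.trans (pairedCohomologyEquiv n k R m)⟩

/-- the cohomology of the Schubert cochain complex over `R` is isomorphic, as a
graded `R`-module, to `⊕_{S ∈ {n;k}} V_S` with `V_S` in degree `d(S)`, where `V_S = R` if
`In(S) = ∅ = Out(S)`, `V_S = ker(R →2→ R)` if `min(In(S) ∪ Out(S)) ∈ Out(S)`, and
`V_S = coker(R →2→ R)` if `min(In(S) ∪ Out(S)) ∈ In(S)`. -/
theorem stmt6 (n k : ℕ) (hk : k ≤ n) (R : Type*) [CommRing R] :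
    ∀ m : ℕ, Nonempty (Hgr n k R m ≃ₗ[R]
      ((↥(freeIdxGr n k m) → R) ×
       (↥(minOutIdxGr n k m) → ↥(LinearMap.ker (two R))) ×
       (↥(minInIdxGr n k m) → R ⧸ LinearMap.range (two R)))) :=
  stmt6_general n k R
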